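/- For each integer k ≥ 2, the first moment of the density ν_k(x) = (1/(2π))·√(4k(k−1)x − k²x²)/(kx − x²) on (0, 4(k−1)/k) equals 1. -/

import Mathlib

/-!
Put `a = 4(k-1)/k`. On `(0, a)` the integrand `x ν_k(x)` equals `k/(2π) · √(x(a-x))/(k-x)`.
For `0 < a ≤ K` one has `∫₀ᵃ √(x(a-x))/(K-x) dx = π (K - a/2 - √(K(K-a)))`, by differentiating an
explicit primitive built from `√(x(a-x))` and two arcsines; integrability comes for free because the
integrand is a nonnegative derivative. For `K = k` we have `K(K-a) = (k-2)²`, so the integral is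
`2π/k` and the first moment is `1`.
-/

open Real MeasureTheory Set

section

variable {a K x : ℝ}

theorem hasDerivAt_sqrt_mul_sub (hx : x ∈ Ioo 0 a) :
    HasDerivAt (fun y => √(y * (a - y))) ((a - 2 * x) / (2 * √(x * (a - x)))) x := by
  have hpos : 0 < x * (a - x) := mul_pos hx.1 (sub_pos.2 hx.2)
  exact (((hasDerivAt_id' x).fun_mul ((hasDerivAt_id' x).const_sub a)).sqrt hpos.ne').congr_deriv
    (by ring)

theorem hasDerivAt_arcsin_two_mul_div_sub_one (hx : x ∈ Ioo 0 a) :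
    HasDerivAt (fun y => arcsin (2 * y / a - 1)) (1 / √(x * (a - x))) x := by
  obtain ⟨hx0, hxa⟩ := hx
  have ha : 0 < a := hx0.trans hxa
  have hlo : 2 * x / a - 1 ≠ -1 := by
    have : 0 < 2 * x / a := by positivity
    linarith
  have hhi : 2 * x / a - 1 ≠ 1 := by
    have : 2 * x / a < 2 := by rw [div_lt_iff₀ ha]; linarith
    linarith
  have hsqrt : √(1 - (2 * x / a - 1) ^ 2) = 2 / a * √(x * (a - x)) := by
    rw [show 1 - (2 * x / a - 1) ^ 2 = (2 / a) ^ 2 * (x * (a - x)) by field_simp; ring,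
      sqrt_mul (by positivity), sqrt_sq (by positivity)]
  refine ((hasDerivAt_arcsin hlo hhi).comp x
    ((((hasDerivAt_id' x).const_mul 2).div_const a).sub_const 1)).congr_deriv ?_
  rw [hsqrt]
  field_simp

theorem hasDerivAt_arcsin_moebius (hK : a < K) (hx : x ∈ Ioo 0 a) :
    HasDerivAt (fun y => arcsin (((2 * K - a) * y - K * a) / (a * (K - y))))
      (√(K * (K - a)) / ((K - x) * √(x * (a - x)))) x := by
  obtain ⟨hx0, hxa⟩ := hx
  have ha : 0 < a := hx0.trans hxa
  have hKx : 0 < K - x := by linarith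
  have hKa : 0 < K * (K - a) := by nlinarith
  have hxax : 0 < x * (a - x) := mul_pos hx0 (by linarith)
  have hden : a * (K - x) ≠ 0 := by positivity
  set ψ := ((2 * K - a) * x - K * a) / (a * (K - x))
  have hψ : 1 - ψ ^ 2 = (2 * √(K * (K - a)) * √(x * (a - x)) / (a * (K - x))) ^ 2 := by
    simp only [ψ, div_pow, mul_pow, sq_sqrt hKa.le, sq_sqrt hxax.le]
    field_simp
    ring
  have hψpos : 0 < 1 - ψ ^ 2 := by rw [hψ]; positivity
  have hlo : ψ ≠ -1 := by rintro h; rw [h] at hψpos; norm_num at hψpos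
  have hhi : ψ ≠ 1 := by rintro h; rw [h] at hψpos; norm_num at hψpos
  refine ((hasDerivAt_arcsin hlo hhi).comp x
    ((((hasDerivAt_id' x).const_mul (2 * K - a)).sub_const (K * a)).div
    (((hasDerivAt_id' x).const_sub K).const_mul a) hden)).congr_deriv ?_
  rw [hψ, sqrt_sq (by positivity)]
  field_simp
  rw [sq_sqrt hKa.le]
  ring

/-- The arcsine argument of the last term has a pole at `x = K`, which lies in `[0, a]` only when
`a = K`, and then the coefficient `√(K(K-a))` vanishes; for `a < K` the argument increases from
`-1` to `1` on `[0, a]`. -/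
noncomputable def sqrtDivPrimitive (a K x : ℝ) : ℝ :=
  -√(x * (a - x)) + (K - a / 2) * arcsin (2 * x / a - 1)
    - √(K * (K - a)) * arcsin (((2 * K - a) * x - K * a) / (a * (K - x)))

theorem hasDerivAt_sqrtDivPrimitive (haK : a ≤ K) (hx : x ∈ Ioo 0 a) :
    HasDerivAt (sqrtDivPrimitive a K) (√(x * (a - x)) / (K - x)) x := by
  have hKx : 0 < K - x := by linarith [hx.2]
  have hxax : 0 < x * (a - x) := mul_pos hx.1 (sub_pos.2 hx.2)
  have h3 : HasDerivAt
      (fun y => √(K * (K - a)) * arcsin (((2 * K - a) * y - K * a) / (a * (K - y))))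
      (K * (K - a) / ((K - x) * √(x * (a - x)))) x := by
    rcases haK.eq_or_lt with rfl | hK
    · simpa using hasDerivAt_const x (0 : ℝ)
    · refine ((hasDerivAt_arcsin_moebius hK hx).const_mul _).congr_deriv ?_
      rw [← mul_div_assoc, mul_self_sqrt (by nlinarith [hx.1, hx.2])]
  refine (((hasDerivAt_sqrt_mul_sub hx).neg.add
    ((hasDerivAt_arcsin_two_mul_div_sub_one hx).const_mul (K - a / 2))).sub h3).congr_deriv ?_
  field_simp
  linear_combination (-2) * mul_self_sqrt hxax.le

theorem continuousOn_sqrtDivPrimitive (ha : 0 < a) (haK : a ≤ K) :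
    ContinuousOn (sqrtDivPrimitive a K) (Icc 0 a) := by
  have h3 : ContinuousOn
      (fun y => √(K * (K - a)) * arcsin (((2 * K - a) * y - K * a) / (a * (K - y)))) (Icc 0 a) := by
    rcases haK.eq_or_lt with rfl | hK
    · simpa using continuousOn_const
    · refine continuousOn_const.mul (continuous_arcsin.comp_continuousOn
        (ContinuousOn.div (by fun_prop) (by fun_prop) fun y hy => ?_))
      exact (mul_pos ha (sub_pos.2 (hy.2.trans_lt hK))).ne'
  exact (Continuous.continuousOn (by fun_prop)).sub h3

theorem sqrtDivPrimitive_sub (ha : 0 < a) (haK : a ≤ K) :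
    sqrtDivPrimitive a K a - sqrtDivPrimitive a K 0 = π * (K - a / 2 - √(K * (K - a))) := by
  have hψa : √(K * (K - a)) * arcsin (((2 * K - a) * a - K * a) / (a * (K - a))) =
      √(K * (K - a)) * (π / 2) := by
    rcases haK.eq_or_lt with rfl | hK
    · simp
    · rw [show (2 * K - a) * a - K * a = a * (K - a) by ring,
        div_self (mul_pos ha (sub_pos.2 hK)).ne', arcsin_one]
  have hψ0 : ((2 * K - a) * 0 - K * a) / (a * (K - 0)) = -1 := by
    rw [mul_zero, zero_sub, sub_zero, neg_div, mul_comm K, div_self (mul_pos ha (ha.trans_le haK)).ne']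
  have hlin : 2 * a / a - 1 = 1 := by field_simp; ring
  rw [sqrtDivPrimitive, sqrtDivPrimitive, hψa, hψ0, hlin]
  simp only [sub_self, mul_zero, zero_mul, zero_div, zero_sub, sqrt_zero, arcsin_one,
    arcsin_neg_one]
  ring

theorem integral_sqrt_mul_sub_div_sub (ha : 0 < a) (haK : a ≤ K) :
    ∫ x in Ioo 0 a, √(x * (a - x)) / (K - x) = π * (K - a / 2 - √(K * (K - a))) := by
  have hderiv : ∀ x ∈ Ioo 0 a, HasDerivAt (sqrtDivPrimitive a K) (√(x * (a - x)) / (K - x)) x :=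
    fun x hx => hasDerivAt_sqrtDivPrimitive haK hx
  have hcont := continuousOn_sqrtDivPrimitive ha haK
  have hint : IntervalIntegrable (fun x => √(x * (a - x)) / (K - x)) volume 0 a :=
    (intervalIntegrable_iff_integrableOn_Ioc_of_le ha.le).2 <|
      intervalIntegral.integrableOn_deriv_of_nonneg hcont hderiv fun x hx =>
        div_nonneg (sqrt_nonneg _) (by linarith [hx.2])
  rw [← integral_Ioc_eq_integral_Ioo, ← intervalIntegral.integral_of_le ha.le,
    intervalIntegral.integral_eq_sub_of_hasDerivAt_of_le ha.le hcont hderiv hint,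
    sqrtDivPrimitive_sub ha haK]

end

/-- For `k ≥ 2`, the first moment of the density `ν_k` equals 1. -/
theorem nu_k_first_moment (k : ℕ) (hk : 2 ≤ k) :
    ∫ x in Set.Ioo (0:ℝ) (4 * ((k:ℝ) - 1) / k),
      x * ((1 / (2 * π)) * Real.sqrt (4 * k * ((k:ℝ) - 1) * x - (k:ℝ) ^ 2 * x ^ 2)
        / ((k:ℝ) * x - x ^ 2)) = 1 := by
  have hK : (2 : ℝ) ≤ k := by exact_mod_cast hk
  set K : ℝ := (k : ℝ)
  set a := 4 * (K - 1) / K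
  have ha : 0 < a := div_pos (by linarith) (by linarith)
  have hKa4 : K * a = 4 * (K - 1) := mul_div_cancel₀ _ (by positivity)
  clear_value K a
  have hKa : K * (K - a) = (K - 2) ^ 2 := by linear_combination -hKa4
  have haK : a ≤ K := by nlinarith [sq_nonneg (K - 2)]
  have hintegrand : ∀ x ∈ Ioo 0 a,
      x * ((1 / (2 * π)) * √(4 * K * (K - 1) * x - K ^ 2 * x ^ 2) / (K * x - x ^ 2)) =
        K / (2 * π) * (√(x * (a - x)) / (K - x)) := fun x hx => by
    rw [show 4 * K * (K - 1) * x - K ^ 2 * x ^ 2 = K ^ 2 * (x * (a - x)) by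
      linear_combination (-K * x) * hKa4,
      sqrt_mul (sq_nonneg K), sqrt_sq (by linarith), show K * x - x ^ 2 = x * (K - x) by ring]
    field_simp [hx.1.ne']
  rw [setIntegral_congr_fun measurableSet_Ioo hintegrand, integral_const_mul,
    integral_sqrt_mul_sub_div_sub ha haK, hKa, sqrt_sq (by linarith)]
  field_simp
  linear_combination -hKa4
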